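/- arXiv:2506.07550 — 2 statements merged into one kernel-verified Lean document; each statement's English description precedes it below -/
import Mathlib

section
/- Let $a, b \in \mathbb{R}^n$ be nonzero, let $T \subseteq \mathbb{R}^n$ be a cone, and suppose there exist $y, z \in T$ with $\langle a, y \rangle < 0 < \langle a, z \rangle$. Then there exists $\epsilon > 0$ such that for every nonzero $b \in \mathbb{R}^n$ with $|b - a| < \epsilon$, we have $T + \ker(\langle b, \cdot \rangle) = \mathbb{R}^n$, where $\ker(\langle b, \cdot \rangle) = \{x \in \mathbb{R}^n : \langle b, x \rangle = 0\}$. -/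
open scoped Pointwise
open Filter Topology

/-!
For `b` near `a` the functional `⟪b, ·⟫` still takes opposite signs at `y` and `z`, by continuity.
Then every `x` is a nonnegative multiple of `y` or of `z` (chosen by the sign of `⟪b, x⟫`)
plus a vector of `ker ⟪b, ·⟫`.
-/

section ConeAddKer

variable {𝕜 E : Type*} [Field 𝕜] [LinearOrder 𝕜] [AddCommGroup E] [Module 𝕜 E] {T : Set E}

theorem mem_add_ker_of_div_nonneg (f : E →ₗ[𝕜] 𝕜)
    (hcone : ∀ t ∈ T, ∀ lam : 𝕜, 0 ≤ lam → lam • t ∈ T)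
    {t x : E} (ht : t ∈ T) (hft : f t ≠ 0) (hx : 0 ≤ f x / f t) :
    x ∈ T + {v | f v = 0} :=
  ⟨(f x / f t) • t, hcone t ht _ hx, x - (f x / f t) • t, by simp [hft], add_sub_cancel _ _⟩

theorem cone_add_ker_eq_univ [IsStrictOrderedRing 𝕜] (f : E →ₗ[𝕜] 𝕜)
    (hcone : ∀ t ∈ T, ∀ lam : 𝕜, 0 ≤ lam → lam • t ∈ T)
    {y z : E} (hy : y ∈ T) (hz : z ∈ T) (hfy : f y < 0) (hfz : 0 < f z) :
    T + {v | f v = 0} = Set.univ := by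
  refine Set.eq_univ_of_forall fun x => ?_
  rcases le_or_gt 0 (f x) with hx | hx
  · exact mem_add_ker_of_div_nonneg f hcone hz hfz.ne' (div_nonneg hx hfz.le)
  · exact mem_add_ker_of_div_nonneg f hcone hy hfy.ne (div_nonneg_of_nonpos hx.le hfy.le)

end ConeAddKer

theorem stmt9_general (n : ℕ) (a : EuclideanSpace ℝ (Fin n))
    (T : Set (EuclideanSpace ℝ (Fin n)))
    (hcone : ∀ t ∈ T, ∀ lam : ℝ, 0 ≤ lam → lam • t ∈ T)
    (y z : EuclideanSpace ℝ (Fin n)) (hy : y ∈ T) (hz : z ∈ T)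
    (hya : (inner ℝ a y : ℝ) < 0) (hza : (0 : ℝ) < inner ℝ a z) :
    ∃ ε > (0 : ℝ), ∀ b : EuclideanSpace ℝ (Fin n), b ≠ 0 → ‖b - a‖ < ε →
      T + {x : EuclideanSpace ℝ (Fin n) | (inner ℝ b x : ℝ) = 0} = Set.univ := by
  have hinner (v : EuclideanSpace ℝ (Fin n)) :
      Tendsto (fun b => inner ℝ b v) (𝓝 a) (𝓝 (inner ℝ a v)) :=
    (continuous_id.inner continuous_const).tendsto a
  have hnear : ∀ᶠ b in 𝓝 a, inner ℝ b y < (0 : ℝ) ∧ (0 : ℝ) < inner ℝ b z :=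
    ((hinner y).eventually_lt_const hya).and ((hinner z).eventually_const_lt hza)
  obtain ⟨ε, hε, hball⟩ := Metric.eventually_nhds_iff.mp hnear
  refine ⟨ε, hε, fun b _ hba => ?_⟩
  obtain ⟨hby, hbz⟩ := hball (by rwa [dist_eq_norm])
  exact cone_add_ker_eq_univ (innerₛₗ ℝ b) hcone hy hz hby hbz

/-- If a cone `T` contains points strictly on both sides of the hyperplane
`ker⟨a,·⟩` (with `a ≠ 0`), then for every nonzero `b` close enough to `a` we also have
`T + ker⟨b,·⟩ = ℝ^n`. -/
theorem stmt9 (n : ℕ) (a : EuclideanSpace ℝ (Fin n)) (ha : a ≠ 0)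
    (T : Set (EuclideanSpace ℝ (Fin n)))
    (h0 : (0 : EuclideanSpace ℝ (Fin n)) ∈ T)
    (hcone : ∀ t ∈ T, ∀ lam : ℝ, 0 ≤ lam → lam • t ∈ T)
    (y z : EuclideanSpace ℝ (Fin n)) (hy : y ∈ T) (hz : z ∈ T)
    (hya : (inner ℝ a y : ℝ) < 0) (hza : (0 : ℝ) < inner ℝ a z) :
    ∃ ε > (0 : ℝ), ∀ b : EuclideanSpace ℝ (Fin n), b ≠ 0 → ‖b - a‖ < ε →
      T + {x : EuclideanSpace ℝ (Fin n) | (inner ℝ b x : ℝ) = 0} = Set.univ :=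
  stmt9_general n a T hcone y z hy hz hya hza
end

section
/- Let $\mathcal{O}$ be a valuation ring with fraction field $\mathfrak{C}$, let $L \subseteq \mathfrak{C}^n$ be a $\mathfrak{C}$-linear subspace of dimension $d$, and let $I = \{a \in \mathcal{O}^n : \sum_{i=1}^n a_i x_i = 0 \text{ for all } x \in L\}$. Then $I$ is a free $\mathcal{O}$-module of rank $n - d$. -/
/-!
The integral solutions form `J = f⁻¹(W)`, where `W ⊆ 𝔠ⁿ` is the annihilator of `L` and
`f : 𝒪ⁿ → 𝔠ⁿ` is the inclusion. Since `W` is a `𝔠`-subspace, `𝒪ⁿ ⧸ J` is torsion-free; over a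
valuation ring finitely generated torsion-free modules are flat, hence free. So `𝒪ⁿ ⧸ J` is
finitely presented, which makes `J` finitely generated, and `J` is torsion-free, hence free as
well. Its rank is read off after localizing at `𝒪 ∖ {0}`, where `J` becomes `W`, of dimension
`n - d`.
-/

open Module Submodule nonZeroDivisors

theorem Module.free_of_isTorsionFree_of_valuationRing {O N : Type*} [CommRing O] [IsDomain O]
    [ValuationRing O] [AddCommGroup N] [Module O N] [Module.Finite O N] [IsTorsionFree O N] :
    Free O N :=
  have : Flat O N := Flat.flat_iff_torsion_eq_bot_of_isBezout.mpr
    (isTorsionFree_iff_torsion_eq_bot.mp ‹_›)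
  free_of_flat_of_isLocalRing

theorem finrank_comap_dotProductEquiv_dualAnnihilator {K ι : Type*} [Field K] [Fintype ι]
    [DecidableEq ι] (L : Submodule K (ι → K)) :
    finrank K (L.dualAnnihilator.comap (dotProductEquiv K ι).toLinearMap) =
      Fintype.card ι - finrank K L := by
  have h := Subspace.finrank_add_finrank_dualAnnihilator_eq L
  rw [finrank_fintype_fun_eq_card] at h
  rw [comap_equiv_eq_map_symm, LinearEquiv.finrank_map_eq]
  omega

section

variable {O C M M' : Type*} [CommRing O] [Field C] [Algebra O C]
  [AddCommGroup M] [Module O M] [AddCommGroup M'] [Module O M'] [Module C M'] [IsScalarTower O C M']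
  (f : M →ₗ[O] M') (W : Submodule C M')

theorem finrank_comap_restrictScalars [IsFractionRing O C] [IsLocalizedModule O⁰ f] :
    finrank O ((W.restrictScalars O).comap f) = finrank C W := by
  set J := (W.restrictScalars O).comap f
  calc finrank O J = finrank O (J.localized' C O⁰ f) :=
        (IsLocalizedModule.finrank_eq O⁰ (J.toLocalized' C O⁰ f) le_rfl).symm
    _ = finrank C (J.localized' C O⁰ f) := (IsFractionRing.finrank_right_eq O C _).symm
    _ = finrank C W := by rw [(localized'gi C O⁰ f).l_u_eq W]

variable [IsDomain O] [FaithfulSMul O C]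

theorem isTorsionFree_quotient_comap_restrictScalars :
    IsTorsionFree O (M ⧸ (W.restrictScalars O).comap f) := by
  refine .of_smul_eq_zero fun r x hrx => or_iff_not_imp_left.mpr fun hr => ?_
  induction x using Submodule.Quotient.induction_on with | _ m
  rw [← Quotient.mk_smul, Quotient.mk_eq_zero] at hrx
  rw [Quotient.mk_eq_zero, mem_comap, restrictScalars_mem]
  have hr' : algebraMap O C r ≠ 0 :=
    (map_ne_zero_iff _ (FaithfulSMul.algebraMap_injective O C)).mpr hr
  have hrm : algebraMap O C r • f m ∈ W := by simpa [algebraMap_smul] using hrx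
  simpa only [inv_smul_smul₀ hr'] using W.smul_mem (algebraMap O C r)⁻¹ hrm

variable [ValuationRing O] [Module.Finite O M]

theorem fg_comap_restrictScalars : ((W.restrictScalars O).comap f).FG := by
  set J := (W.restrictScalars O).comap f
  have := isTorsionFree_quotient_comap_restrictScalars f W
  have : Free O (M ⧸ J) := free_of_isTorsionFree_of_valuationRing
  have := finitePresentation_of_projective O (M ⧸ J)
  simpa only [ker_mkQ] using FinitePresentation.fg_ker J.mkQ J.mkQ_surjective

instance : Module.Finite O ((W.restrictScalars O).comap f) :=
  Module.Finite.iff_fg.mpr (fg_comap_restrictScalars f W)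

instance [IsTorsionFree O M] : Free O ((W.restrictScalars O).comap f) :=
  free_of_isTorsionFree_of_valuationRing

end

/-- Let `𝒪` be a valuation ring with fraction field `𝔠` and
`L ⊆ 𝔠^n` a `𝔠`-subspace of dimension `d`. Then the `𝒪`-module of integral linear
forms vanishing on `L` is free of rank `n - d`. -/
theorem stmt12 {O C : Type*} [CommRing O] [IsDomain O] [ValuationRing O]
    [Field C] [Algebra O C] [IsFractionRing O C] (n d : ℕ)
    (L : Submodule C (Fin n → C)) (hd : Module.finrank C L = d) :
    ∃ J : Submodule O (Fin n → O),
      (J : Set (Fin n → O))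
          = {a : Fin n → O | ∀ x ∈ L, ∑ i, algebraMap O C (a i) * x i = 0}
        ∧ Nonempty (Module.Basis (Fin (n - d)) O J) := by
  let W := L.dualAnnihilator.comap (dotProductEquiv C (Fin n)).toLinearMap
  let f : (Fin n → O) →ₗ[O] (Fin n → C) := .pi fun i ↦ Algebra.linearMap O C ∘ₗ .proj i
  refine ⟨(W.restrictScalars O).comap f, ?_, ⟨finBasisOfFinrankEq O _ ?_⟩⟩
  · ext a
    simp [W, f, mem_dualAnnihilator, dotProduct]
  · rw [finrank_comap_restrictScalars, finrank_comap_dotProductEquiv_dualAnnihilator,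
      Fintype.card_fin, hd]
end
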